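/- The mutual information region 𝓘_{XY} is a convex subset of ℝ³: for any two auxiliary random variables U₀, U₁ and any λ ∈ [0,1], the point (1−λ)·(I(X;U₀), I(Y;U₀), I(X,Y;U₀)) + λ·(I(X;U₁), I(Y;U₁), I(X,Y;U₁)) lies in 𝓘_{XY}. -/

import Mathlib

open scoped BigOperators Pointwise Classical

noncomputable section

namespace GW

/-- A probability mass function on a finite type. -/
def IsPMF {α : Type} [Fintype α] (p : α → ℝ) : Prop :=
  (∀ a, 0 ≤ p a) ∧ ∑ a, p a = 1

/-- Distribution (pmf) of the random variable `f` under the pmf `p`. -/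
def dist {α β : Type} [Fintype α] (p : α → ℝ) (f : α → β) : β → ℝ :=
  fun b => ∑ a, if f a = b then p a else 0

/-- Shannon entropy (base 2) of the random variable `f` under the pmf `p`. -/
def H {α β : Type} [Fintype α] [Fintype β] (p : α → ℝ) (f : α → β) : ℝ :=
  ∑ b, -(dist p f b * Real.logb 2 (dist p f b))

/-- Mutual information `I(f; g)` under `p`. -/
def I2 {α β γ : Type} [Fintype α] [Fintype β] [Fintype γ]
    (p : α → ℝ) (f : α → β) (g : α → γ) : ℝ :=
  H p f + H p g - H p (fun a => (f a, g a))

/-- Conditional entropy `H(f | g)` under `p`. -/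
def Hc {α β γ : Type} [Fintype α] [Fintype β] [Fintype γ]
    (p : α → ℝ) (f : α → β) (g : α → γ) : ℝ :=
  H p (fun a => (f a, g a)) - H p g

/-- Conditional mutual information `I(f; g | h)` under `p`. -/
def Ic {α β γ δ : Type} [Fintype α] [Fintype β] [Fintype γ] [Fintype δ]
    (p : α → ℝ) (f : α → β) (g : α → γ) (h : α → δ) : ℝ :=
  Hc p f h + Hc p g h - Hc p (fun a => (f a, g a)) h

/-- Independence of the random variables `f` and `g` under `p`. -/
def Indep {α β γ : Type} [Fintype α] (p : α → ℝ) (f : α → β) (g : α → γ) : Prop :=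
  ∀ b c, dist p (fun a => (f a, g a)) (b, c) = dist p f b * dist p g c

/-- `q` is a joint pmf on `X × Y × U` whose `(X,Y)`-marginal is `p`; i.e. `U` is an
auxiliary random variable defined jointly with `(X,Y)` via a conditional pmf `p_{U|XY}`. -/
def IsAux {X Y U : Type} [Fintype X] [Fintype Y] [Fintype U]
    (p : X × Y → ℝ) (q : X × Y × U → ℝ) : Prop :=
  IsPMF q ∧ ∀ x y, (∑ u, q (x, y, u)) = p (x, y)

/-- Coordinate map onto `X`. -/
def cX {X Y U : Type} : X × Y × U → X := fun a => a.1
/-- Coordinate map onto `Y`. -/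
def cY {X Y U : Type} : X × Y × U → Y := fun a => a.2.1
/-- Coordinate map onto `U`. -/
def cU {X Y U : Type} : X × Y × U → U := fun a => a.2.2
/-- Coordinate map onto `X × Y`. -/
def cXY {X Y U : Type} : X × Y × U → X × Y := fun a => (a.1, a.2.1)

/-- The mutual information region `𝓘_{XY}`. -/
def MIRegion {X Y : Type} [Fintype X] [Fintype Y] (p : X × Y → ℝ) : Set (ℝ × ℝ × ℝ) :=
  { v | ∃ (U : Type) (_ : Fintype U) (q : X × Y × U → ℝ), IsAux p q ∧
      v = (I2 q cX cU, I2 q cY cU, I2 q cXY cU) }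

/-- The outer region `𝓘ᵒ_{XY}`. -/
def OuterRegion {X Y : Type} [Fintype X] [Fintype Y] (p : X × Y → ℝ) : Set (ℝ × ℝ × ℝ) :=
  { v | 0 ≤ v.1 ∧ 0 ≤ v.2.1 ∧ v.1 + v.2.1 - v.2.2 ≤ I2 p Prod.fst Prod.snd ∧
        0 ≤ v.2.2 - v.2.1 ∧ v.2.2 - v.2.1 ≤ Hc p Prod.fst Prod.snd ∧
        0 ≤ v.2.2 - v.1 ∧ v.2.2 - v.1 ≤ Hc p Prod.snd Prod.fst }

/-- Maximal interaction information `G_NNI(X; Y)`. -/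
def GNNI {X Y : Type} [Fintype X] [Fintype Y] (p : X × Y → ℝ) : ℝ :=
  sSup { r | ∃ (U : Type) (_ : Fintype U) (q : X × Y × U → ℝ), IsAux p q ∧
      r = Ic q cX cY cU - I2 p Prod.fst Prod.snd }

/-- Asymmetric private interaction information `G_PNI(X → Y)`. -/
def GPNI {X Y : Type} [Fintype X] [Fintype Y] (p : X × Y → ℝ) : ℝ :=
  sSup { r | ∃ (U : Type) (_ : Fintype U) (q : X × Y × U → ℝ), IsAux p q ∧
      Indep q cU cX ∧ r = Ic q cX cY cU - I2 p Prod.fst Prod.snd }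

/-- Symmetric private interaction information `G_PPI(X; Y)`. -/
def GPPI {X Y : Type} [Fintype X] [Fintype Y] (p : X × Y → ℝ) : ℝ :=
  sSup { r | ∃ (U : Type) (_ : Fintype U) (q : X × Y × U → ℝ), IsAux p q ∧
      Indep q cU cX ∧ Indep q cU cY ∧ r = Ic q cX cY cU - I2 p Prod.fst Prod.snd }


/-! Time sharing: flip an independent coin `S` with `P(S = 1) = λ` and let `U` be `U₀` or `U₁`
according to `S`, remembering which side was taken. Then `H(U)` and `H(V, U)` are the
`λ`-mixtures of the corresponding entropies for `U₀` and `U₁` plus the same binary entropy `h(λ)`,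
while `H(V)` is unchanged, so `I(V; U) = (1 - λ) I(V; U₀) + λ I(V; U₁)` for every `V` that is a
function of `(X, Y)`. -/

open Real

section Entropy

variable {α β γ : Type} [Fintype α]

lemma sum_dist [Fintype β] (p : α → ℝ) (f : α → β) : ∑ b, dist p f b = ∑ a, p a := by
  unfold dist
  rw [Finset.sum_comm]
  simp

lemma isPMF_dist [Fintype β] {p : α → ℝ} (hp : IsPMF p) (f : α → β) : IsPMF (dist p f) :=
  ⟨fun _ => Finset.sum_nonneg fun a _ => by split_ifs <;> simp [hp.1 a], by rw [sum_dist, hp.2]⟩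

lemma dist_eq_zero_of_forall_ne (p : α → ℝ) {f : α → β} {b : β} (h : ∀ a, f a ≠ b) :
    dist p f b = 0 :=
  Finset.sum_eq_zero fun a _ => if_neg (h a)

lemma dist_comp_apply {e : β → γ} (he : Function.Injective e) (p : α → ℝ) (f : α → β) (b : β) :
    dist p (e ∘ f) (e b) = dist p f b := by
  simp only [dist, Function.comp, he.eq_iff]

variable [Fintype β] [Fintype γ]

lemma H_eq_sum_negMulLog (p : α → ℝ) (f : α → β) :
    H p f = (∑ b, negMulLog (dist p f b)) / log 2 := by
  simp only [H, negMulLog, logb, Finset.sum_div]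
  congr 1 with b
  ring

lemma H_comp_of_injective {e : β → γ} (he : Function.Injective e) (p : α → ℝ) (f : α → β) :
    H p (e ∘ f) = H p f := by
  rw [H_eq_sum_negMulLog, H_eq_sum_negMulLog]
  congr 1
  refine (Fintype.sum_of_injective e he _ _ (fun c hc => ?_) fun b => ?_).symm
  · rw [dist_eq_zero_of_forall_ne p (f := e ∘ f) fun a h => hc ⟨f a, h⟩, negMulLog_zero]
  · rw [dist_comp_apply he]

end Entropy

lemma sum_negMulLog_const_mul {β : Type} [Fintype β] {d : β → ℝ} (hd : ∑ b, d b = 1) (c : ℝ) :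
    ∑ b, negMulLog (c * d b) = c * ∑ b, negMulLog (d b) + negMulLog c := by
  simp only [negMulLog_mul, Finset.sum_add_distrib, ← Finset.mul_sum, ← Finset.sum_mul, hd]
  ring

lemma negMulLog_add_of_mul_eq_zero {x y : ℝ} (h : x * y = 0) :
    negMulLog (x + y) = negMulLog x + negMulLog y := by
  rcases mul_eq_zero.1 h with rfl | rfl <;> simp

section Marginal

variable {X Y U β : Type} [Fintype X] [Fintype Y] [Fintype U]

lemma dist_comp_cXY {p : X × Y → ℝ} {q : X × Y × U → ℝ} (hq : IsAux p q) (F : X × Y → β) :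
    dist q (F ∘ cXY) = dist p F := by
  ext b
  simp only [dist, Fintype.sum_prod_type, ← hq.2, Finset.ite_sum_zero]
  rfl

lemma H_comp_cXY [Fintype β] {p : X × Y → ℝ} {q : X × Y × U → ℝ} (hq : IsAux p q)
    (F : X × Y → β) : H q (F ∘ cXY) = H p F := by
  rw [H, H, dist_comp_cXY hq]

end Marginal

section TimeSharing

variable {X Y U₀ U₁ β γ : Type} [Fintype X] [Fintype Y] [Fintype U₀] [Fintype U₁]

def inlU : X × Y × U₀ → X × Y × (U₀ ⊕ U₁) := fun a => (a.1, a.2.1, Sum.inl a.2.2)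

def inrU : X × Y × U₁ → X × Y × (U₀ ⊕ U₁) := fun a => (a.1, a.2.1, Sum.inr a.2.2)

def timeShare (l : ℝ) (q₀ : X × Y × U₀ → ℝ) (q₁ : X × Y × U₁ → ℝ) : X × Y × (U₀ ⊕ U₁) → ℝ
  | (x, y, .inl u) => (1 - l) * q₀ (x, y, u)
  | (x, y, .inr u) => l * q₁ (x, y, u)

lemma dist_timeShare (l : ℝ) (q₀ : X × Y × U₀ → ℝ) (q₁ : X × Y × U₁ → ℝ)
    (G : X × Y × (U₀ ⊕ U₁) → γ) (c : γ) :
    dist (timeShare l q₀ q₁) G c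
      = (1 - l) * dist q₀ (G ∘ inlU) c + l * dist q₁ (G ∘ inrU) c := by
  simp only [dist, Finset.mul_sum, mul_ite, mul_zero]
  simp only [Fintype.sum_prod_type, Fintype.sum_sum_type, ← Finset.sum_add_distrib]
  rfl

lemma sum_timeShare (l : ℝ) (q₀ : X × Y × U₀ → ℝ) (q₁ : X × Y × U₁ → ℝ) :
    ∑ a, timeShare l q₀ q₁ a = (1 - l) * ∑ a, q₀ a + l * ∑ a, q₁ a := by
  simp only [Fintype.sum_prod_type, Fintype.sum_sum_type, timeShare, Finset.sum_add_distrib,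
    ← Finset.mul_sum]

lemma isAux_timeShare {p : X × Y → ℝ} {q₀ : X × Y × U₀ → ℝ} {q₁ : X × Y × U₁ → ℝ}
    (hq₀ : IsAux p q₀) (hq₁ : IsAux p q₁) {l : ℝ} (hl₀ : 0 ≤ l) (hl₁ : l ≤ 1) :
    IsAux p (timeShare l q₀ q₁) := by
  refine ⟨⟨?_, ?_⟩, fun x y => ?_⟩
  · rintro ⟨x, y, u | u⟩
    · exact mul_nonneg (sub_nonneg.2 hl₁) (hq₀.1.1 _)
    · exact mul_nonneg hl₀ (hq₁.1.1 _)
  · rw [sum_timeShare, hq₀.1.2, hq₁.1.2]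
    ring
  · simp only [Fintype.sum_sum_type, timeShare, ← Finset.mul_sum, hq₀.2, hq₁.2]
    ring

variable [Fintype β] [Fintype γ]

lemma H_timeShare {q₀ : X × Y × U₀ → ℝ} {q₁ : X × Y × U₁ → ℝ} (hq₀ : IsPMF q₀) (hq₁ : IsPMF q₁)
    (l : ℝ) (G : X × Y × (U₀ ⊕ U₁) → γ) (hG : ∀ a b, G (inlU a) ≠ G (inrU b)) :
    H (timeShare l q₀ q₁) G
      = (1 - l) * H q₀ (G ∘ inlU) + l * H q₁ (G ∘ inrU) + binEntropy l / log 2 := by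
  have hdisjoint : ∀ c, dist q₀ (G ∘ inlU) c * dist q₁ (G ∘ inrU) c = 0 := by
    intro c
    by_cases h : ∃ a, G (inlU a) = c
    · obtain ⟨a, rfl⟩ := h
      exact mul_eq_zero_of_right _ (dist_eq_zero_of_forall_ne q₁ fun b => (hG a b).symm)
    · simp only [not_exists] at h
      exact mul_eq_zero_of_left (dist_eq_zero_of_forall_ne q₀ h) _
  simp only [H_eq_sum_negMulLog, dist_timeShare]
  rw [Finset.sum_congr rfl fun c _ => negMulLog_add_of_mul_eq_zero
      (by rw [mul_mul_mul_comm, hdisjoint, mul_zero]),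
    Finset.sum_add_distrib, sum_negMulLog_const_mul (isPMF_dist hq₀ _).2,
    sum_negMulLog_const_mul (isPMF_dist hq₁ _).2, binEntropy_eq_negMulLog_add_negMulLog_one_sub]
  ring

lemma I2_timeShare {p : X × Y → ℝ} {q₀ : X × Y × U₀ → ℝ} {q₁ : X × Y × U₁ → ℝ}
    (hq₀ : IsAux p q₀) (hq₁ : IsAux p q₁) {l : ℝ} (hl₀ : 0 ≤ l) (hl₁ : l ≤ 1) (F : X × Y → β) :
    I2 (timeShare l q₀ q₁) (F ∘ cXY) cU
      = (1 - l) * I2 q₀ (F ∘ cXY) cU + l * I2 q₁ (F ∘ cXY) cU := by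
  have hU : H (timeShare l q₀ q₁) cU
      = (1 - l) * H q₀ cU + l * H q₁ cU + binEntropy l / log 2 := by
    rw [H_timeShare hq₀.1 hq₁.1 l cU fun _ _ => Sum.inl_ne_inr,
      ← H_comp_of_injective (Sum.inl_injective (β := U₁)) q₀ cU,
      ← H_comp_of_injective (Sum.inr_injective (α := U₀)) q₁ cU]
    rfl
  have hFU : H (timeShare l q₀ q₁) (fun a => ((F ∘ cXY) a, cU a))
      = (1 - l) * H q₀ (fun a => ((F ∘ cXY) a, cU a))
        + l * H q₁ (fun a => ((F ∘ cXY) a, cU a)) + binEntropy l / log 2 := by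
    rw [H_timeShare hq₀.1 hq₁.1 l _ fun _ _ h => Sum.inl_ne_inr (congrArg Prod.snd h),
      ← H_comp_of_injective (Function.injective_id.prodMap (Sum.inl_injective (β := U₁))) q₀
        (fun a => ((F ∘ cXY) a, cU a)),
      ← H_comp_of_injective (Function.injective_id.prodMap (Sum.inr_injective (α := U₀))) q₁
        (fun a => ((F ∘ cXY) a, cU a))]
    rfl
  unfold I2
  rw [H_comp_cXY (isAux_timeShare hq₀ hq₁ hl₀ hl₁), H_comp_cXY hq₀, H_comp_cXY hq₁, hU, hFU]
  ring

end TimeSharing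

lemma convex_combination_mem_MIRegion {X Y U₀ U₁ : Type} [Fintype X] [Fintype Y] [Fintype U₀]
    [Fintype U₁] {p : X × Y → ℝ} {q₀ : X × Y × U₀ → ℝ} {q₁ : X × Y × U₁ → ℝ}
    (hq₀ : IsAux p q₀) (hq₁ : IsAux p q₁) {l : ℝ} (hl₀ : 0 ≤ l) (hl₁ : l ≤ 1) :
    (1 - l) • ((I2 q₀ cX cU, I2 q₀ cY cU, I2 q₀ cXY cU) : ℝ × ℝ × ℝ)
      + l • ((I2 q₁ cX cU, I2 q₁ cY cU, I2 q₁ cXY cU) : ℝ × ℝ × ℝ) ∈ MIRegion p := by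
  refine ⟨U₀ ⊕ U₁, inferInstance, timeShare l q₀ q₁, isAux_timeShare hq₀ hq₁ hl₀ hl₁, ?_⟩
  simp only [Prod.smul_mk, Prod.mk_add_mk, smul_eq_mul, Prod.mk.injEq]
  exact ⟨(I2_timeShare hq₀ hq₁ hl₀ hl₁ Prod.fst).symm, (I2_timeShare hq₀ hq₁ hl₀ hl₁ Prod.snd).symm,
    (I2_timeShare hq₀ hq₁ hl₀ hl₁ id).symm⟩

lemma convex_MIRegion {X Y : Type} [Fintype X] [Fintype Y] (p : X × Y → ℝ) :
    Convex ℝ (MIRegion p) := by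
  rintro _ ⟨U₀, _, q₀, hq₀, rfl⟩ _ ⟨U₁, _, q₁, hq₁, rfl⟩ a b ha hb hab
  obtain rfl : a = 1 - b := by linarith
  exact convex_combination_mem_MIRegion hq₀ hq₁ hb (by linarith)

theorem stmt1_general {X Y : Type} [Fintype X] [Fintype Y] (p : X × Y → ℝ) :
    Convex ℝ (MIRegion p) ∧
    ∀ (U₀ U₁ : Type) (_ : Fintype U₀) (_ : Fintype U₁)
      (q₀ : X × Y × U₀ → ℝ) (q₁ : X × Y × U₁ → ℝ),
      IsAux p q₀ → IsAux p q₁ → ∀ l : ℝ, 0 ≤ l → l ≤ 1 →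
      (1 - l) • ((I2 q₀ cX cU, I2 q₀ cY cU, I2 q₀ cXY cU) : ℝ × ℝ × ℝ)
        + l • ((I2 q₁ cX cU, I2 q₁ cY cU, I2 q₁ cXY cU) : ℝ × ℝ × ℝ) ∈ MIRegion p :=
  ⟨convex_MIRegion p, fun _ _ _ _ _ _ hq₀ hq₁ _ hl₀ hl₁ =>
    convex_combination_mem_MIRegion hq₀ hq₁ hl₀ hl₁⟩

/-- the mutual information region is convex: every convex combination of two
points achieved by auxiliary random variables `U₀`, `U₁` again lies in `𝓘_{XY}`. -/
theorem stmt1 {X Y : Type} [Fintype X] [Fintype Y] (p : X × Y → ℝ) (hp : IsPMF p) :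
    Convex ℝ (MIRegion p) ∧
    ∀ (U₀ U₁ : Type) (_ : Fintype U₀) (_ : Fintype U₁)
      (q₀ : X × Y × U₀ → ℝ) (q₁ : X × Y × U₁ → ℝ),
      IsAux p q₀ → IsAux p q₁ → ∀ l : ℝ, 0 ≤ l → l ≤ 1 →
      (1 - l) • ((I2 q₀ cX cU, I2 q₀ cY cU, I2 q₀ cXY cU) : ℝ × ℝ × ℝ)
        + l • ((I2 q₁ cX cU, I2 q₁ cY cU, I2 q₁ cXY cU) : ℝ × ℝ × ℝ) ∈ MIRegion p :=
  stmt1_general p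

end GW
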